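/- Let X(Γ) be the universal cover of the Salvetti complex of G(Γ). Let K ⊂ X(Γ) be a standard subcomplex and define Δ(K) ⊂ 𝒫(Γ) to be the union of Δ(F) over all standard flats F ⊂ K. If a vertex v ∈ 𝒫(Γ) does not lie in Δ(K), then the 0-skeleton of K is contained in a single v-level. -/

import Mathlib

/-! A model of the right-angled Artin group `G(Γ)` and of the vertex set of the
universal cover `X(Γ)` of its Salvetti complex: the group is the presented group
with commutator relations from `Γ`, and the `0`-skeleton of `X(Γ)` is identified
with `G(Γ)`, with the `1`-skeleton given by the Cayley graph. -/

/-- The commutator relators of the right-angled Artin group on `Γ`. -/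
def raagRels {ι : Type} (Γ : SimpleGraph ι) : Set (FreeGroup ι) :=
  {r | ∃ i j : ι, Γ.Adj i j ∧
    r = FreeGroup.of i * FreeGroup.of j * (FreeGroup.of i)⁻¹ * (FreeGroup.of j)⁻¹}

/-- The right-angled Artin group `G(Γ)`. -/
abbrev Raag {ι : Type} (Γ : SimpleGraph ι) := PresentedGroup (raagRels Γ)

/-- The standard generator of `G(Γ)` corresponding to a vertex of `Γ`. -/
def rgen {ι : Type} (Γ : SimpleGraph ι) (i : ι) : Raag Γ := PresentedGroup.of i

/-- The Cayley graph of `G(Γ)` w.r.t. the standard generators: the 1-skeleton of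
`X(Γ)`, with vertex set identified with `G(Γ)`. -/
def cayley {ι : Type} (Γ : SimpleGraph ι) : SimpleGraph (Raag Γ) where
  Adj g h := g ≠ h ∧ ∃ i : ι, h = g * rgen Γ i ∨ g = h * rgen Γ i
  symm := ⟨by rintro g h ⟨hne, i, hi⟩; exact ⟨hne.symm, i, hi.symm⟩⟩
  loopless := ⟨by rintro g ⟨hne, _⟩; exact hne rfl⟩

/-- The distance from a vertex to a set of vertices (in the graph metric, i.e.
the word metric). -/
noncomputable def setDistN {V : Type} (G : SimpleGraph V) (x : V) (B : Set V) : ℕ :=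
  sInf ((fun b => G.dist x b) '' B)

/-- Two nonempty subsets are parallel: the distance to one is constant on the
other, and vice versa (with a common constant). -/
def ParSets {V : Type} (G : SimpleGraph V) (A B : Set V) : Prop :=
  A.Nonempty ∧ B.Nonempty ∧ ∃ c : ℕ,
    (∀ a ∈ A, setDistN G a B = c) ∧ (∀ b ∈ B, setDistN G b A = c)

/-- `m` is the unique nearest point of `A` to `z` (the nearest-point projection
of `z` onto `A`). -/
def NearestPt {V : Type} (G : SimpleGraph V) (A : Set V) (z m : V) : Prop :=
  m ∈ A ∧ ∀ w ∈ A, w ≠ m → G.dist z m < G.dist z w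

/-- The (vertex set of the) standard geodesic through `g` in the direction of the
generator `i`. -/
def stdGeod {ι : Type} (Γ : SimpleGraph ι) (g : Raag Γ) (i : ι) : Set (Raag Γ) :=
  {h | ∃ n : ℤ, h = g * rgen Γ i ^ n}

/-- `A` is (the vertex set of) a standard geodesic of `X(Γ)`. -/
def IsStdGeod {ι : Type} (Γ : SimpleGraph ι) (A : Set (Raag Γ)) : Prop :=
  ∃ (g : Raag Γ) (i : ι), A = stdGeod Γ g i

/-- The standard geodesics `A` and `B` span a standard 2-flat. -/
def Span2 {ι : Type} (Γ : SimpleGraph ι) (A B : Set (Raag Γ)) : Prop :=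
  ∃ (g : Raag Γ) (i j : ι), Γ.Adj i j ∧ A = stdGeod Γ g i ∧ B = stdGeod Γ g j

/-- The vertices `Δ(A)`, `Δ(B)` of the extension complex `𝒫(Γ)` determined by
the standard geodesics `A`, `B` are adjacent: some parallel representatives span
a standard 2-flat. -/
def ClassAdj {ι : Type} (Γ : SimpleGraph ι) (A B : Set (Raag Γ)) : Prop :=
  ∃ A' B' : Set (Raag Γ), IsStdGeod Γ A' ∧ IsStdGeod Γ B' ∧
    ParSets (cayley Γ) A A' ∧ ParSets (cayley Γ) B B' ∧
    (Span2 Γ A' B' ∨ Span2 Γ B' A')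

/-- `F` is (the 0-skeleton of) a standard flat of `X(Γ)`: a coset of the standard
abelian subgroup generated by a finite clique of `Γ`. -/
def IsStdFlat {ι : Type} (Γ : SimpleGraph ι) (F : Set (Raag Γ)) : Prop :=
  ∃ (g : Raag Γ) (S : Set ι), S.Finite ∧ S.Pairwise Γ.Adj ∧
    F = (fun x => g * x) '' (Subgroup.closure (rgen Γ '' S) : Set (Raag Γ))

/-- The `Δ(l)`-level of height `x`: the set of vertices whose nearest-point
projection onto the standard geodesic `l` is `x`. -/
def levelSet {ι : Type} (Γ : SimpleGraph ι) (l : Set (Raag Γ)) (x : Raag Γ) :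
    Set (Raag Γ) :=
  {z | NearestPt (cayley Γ) l z x}


/-! Word lengths in `G(Γ)` are computed with normal forms: reduced words up to swapping
commuting neighbours, on which `G(Γ)` acts by left multiplication. Two consequences drive the
proof. Along a standard geodesic `l`, the distance to a vertex `z` changes by one at each step
and has no strict local maximum, so it is `c + |n - p|` and `z` has a unique nearest point on
`l`. And a "strip lemma": if `s r` and `r t` are shorter than `r` but `s r t` is not, then
`s r = r t`. If an edge from `z` to `z y` changes the projection to `l`, the strip lemma shows
that right multiplication by `y` acts on `z` as a translation along `l`; the standard geodesic
through that edge is then an orbit of these translations, hence parallel to `l`. Since `K` is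
connected through edges whose standard geodesics lie in `K`, the projection to `l` is constant
on `K` when no such geodesic is parallel to `l`. -/

lemma parSets_range {V : Type} {G : SimpleGraph V} {u v : ℤ → V} {c : ℕ} {e p : ℤ}
    (he : e * e = 1) (hd : ∀ k m, G.dist (u k) (v m) = c + (m - e * k - p).natAbs) :
    ParSets G (Set.range u) (Set.range v) := by
  refine ⟨Set.range_nonempty u, Set.range_nonempty v, c, ?_, ?_⟩
  · rintro _ ⟨k, rfl⟩
    refine IsLeast.csInf_eq ⟨⟨v (e * k + p), ⟨_, rfl⟩, by simp [hd]⟩, ?_⟩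
    rintro _ ⟨_, ⟨m, rfl⟩, rfl⟩
    simp [hd]
  · rintro _ ⟨m, rfl⟩
    refine IsLeast.csInf_eq ⟨⟨u (e * (m - p)), ⟨_, rfl⟩, ?_⟩, ?_⟩
    · show G.dist (v m) (u _) = c
      rw [G.dist_comm, hd, show m - e * (e * (m - p)) - p = 0 by linear_combination (p - m) * he]
      simp
    · rintro _ ⟨_, ⟨k, rfl⟩, rfl⟩
      simp [G.dist_comm, hd]

lemma add_natCast_eq_of_forall_le {f : ℤ → ℕ}
    (hstep : ∀ n, f (n + 1) + 1 = f n ∨ f (n + 1) = f n + 1)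
    (hmax : ∀ n, ¬ (f (n + 1) < f n ∧ f (n - 1) < f n)) {p : ℤ} (hp : ∀ n, f p ≤ f n)
    (k : ℕ) : f (p + k) = f p + k := by
  suffices h : f (p + k) = f p + k ∧ f (p + k + 1) = f p + k + 1 from h.1
  induction k with
  | zero =>
      have := hstep p
      have := hp (p + 1)
      simpa using (by omega : f (p + 1) = f p + 1)
  | succ k ih =>
      have h₁ := hstep (p + k + 1)
      have h₂ := hmax (p + k + 1)
      rw [add_sub_cancel_right] at h₂
      push_cast
      rw [← add_assoc]
      omega

theorem exists_forall_eq_add_natAbs_sub {f : ℤ → ℕ}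
    (hstep : ∀ n, f (n + 1) + 1 = f n ∨ f (n + 1) = f n + 1)
    (hmax : ∀ n, ¬ (f (n + 1) < f n ∧ f (n - 1) < f n)) :
    ∃ p, ∀ n, f n = f p + (n - p).natAbs := by
  set p := Function.argmin f
  have hp : ∀ n, f p ≤ f n := fun n => Function.argmin_le f n
  refine ⟨p, fun n => ?_⟩
  rcases le_total p n with h | h
  · obtain ⟨k, rfl⟩ := Int.le.dest h
    rw [add_natCast_eq_of_forall_le hstep hmax hp k]
    simp
  · obtain ⟨k, hk⟩ := Int.le.dest h
    have hstep' : ∀ n, f (-(n + 1)) + 1 = f (-n) ∨ f (-(n + 1)) = f (-n) + 1 := fun n => by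
      have := hstep (-(n + 1))
      rw [show -(n + 1) + 1 = -n by ring] at this
      omega
    have hmax' : ∀ n, ¬ (f (-(n + 1)) < f (-n) ∧ f (-(n - 1)) < f (-n)) := fun n => by
      have := hmax (-n)
      rw [show -n + 1 = -(n - 1) by ring, show -n - 1 = -(n + 1) by ring] at this
      tauto
    have := add_natCast_eq_of_forall_le (f := fun n => f (-n)) hstep' hmax' (p := -p)
      (fun n => by simpa using hp (-n)) k
    rw [show -(-p + k) = n by omega, neg_neg] at this
    rw [this]
    omega

theorem List.append_cons_eq_append_cons_iff {α : Type*} {p q s r : List α} {a b : α} :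
    p ++ a :: s = q ++ b :: r ↔
      (p = q ∧ a = b ∧ s = r) ∨ (∃ m, q = p ++ a :: m ∧ s = m ++ b :: r) ∨
        (∃ m, p = q ++ b :: m ∧ r = m ++ a :: s) := by
  rw [List.append_eq_append_iff]
  constructor
  · rintro (⟨_ | ⟨c, m⟩, rfl, h⟩ | ⟨_ | ⟨c, m⟩, rfl, h⟩) <;> simp_all
  · rintro (⟨rfl, rfl, rfl⟩ | ⟨m, rfl, rfl⟩ | ⟨m, rfl, rfl⟩) <;> simp

namespace Raag

variable {ι : Type} (Γ : SimpleGraph ι)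

/-- The letter `(i, ε)` stands for `rgen Γ i ^ ε`. -/
abbrev Letter (ι : Type) := ι × ℤˣ

def Letter.inv (x : Letter ι) : Letter ι := (x.1, -x.2)

@[simp] lemma Letter.inv_fst (x : Letter ι) : x.inv.1 = x.1 := rfl

@[simp] lemma Letter.inv_inv (x : Letter ι) : x.inv.inv = x := by simp [Letter.inv]

lemma Letter.inv_ne (x : Letter ι) : x.inv ≠ x := fun h =>
  units_ne_neg_self x.2 (congrArg Prod.snd h).symm

def ofLetter (x : Letter ι) : Raag Γ := rgen Γ x.1 ^ (x.2 : ℤ)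

def ofWord (w : List (Letter ι)) : Raag Γ := (w.map (ofLetter Γ)).prod

def Swap (w w' : List (Letter ι)) : Prop :=
  ∃ p x y s, Γ.Adj x.1 y.1 ∧ w = p ++ x :: y :: s ∧ w' = p ++ y :: x :: s

def Shuffle : List (Letter ι) → List (Letter ι) → Prop := Relation.ReflTransGen (Swap Γ)

variable {Γ}

@[simp] lemma ofLetter_inv (x : Letter ι) : ofLetter Γ x.inv = (ofLetter Γ x)⁻¹ := by
  simp [ofLetter, Letter.inv, zpow_neg]

@[simp] lemma ofWord_nil : ofWord Γ ([] : List (Letter ι)) = 1 := rfl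

@[simp] lemma ofWord_cons (x : Letter ι) (w : List (Letter ι)) :
    ofWord Γ (x :: w) = ofLetter Γ x * ofWord Γ w := by simp [ofWord]

@[simp] lemma ofWord_append (u v : List (Letter ι)) :
    ofWord Γ (u ++ v) = ofWord Γ u * ofWord Γ v := by simp [ofWord]

lemma rgen_commute {i j : ι} (hij : Γ.Adj i j) : Commute (rgen Γ i) (rgen Γ j) := by
  have hrel : PresentedGroup.mk (raagRels Γ)
      (FreeGroup.of i * FreeGroup.of j * (FreeGroup.of i)⁻¹ * (FreeGroup.of j)⁻¹) = 1 :=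
    PresentedGroup.mk_eq_one_iff.2 (Subgroup.subset_normalClosure ⟨i, j, hij, rfl⟩)
  simp only [map_mul, map_inv] at hrel
  exact commutatorElement_eq_one_iff_commute.1 hrel

lemma Swap.symm {w w' : List (Letter ι)} (h : Swap Γ w w') : Swap Γ w' w := by
  obtain ⟨p, x, y, s, hxy, rfl, rfl⟩ := h
  exact ⟨p, y, x, s, hxy.symm, rfl, rfl⟩

namespace Shuffle

lemma refl (w : List (Letter ι)) : Shuffle Γ w w := Relation.ReflTransGen.refl

lemma trans {u v w : List (Letter ι)} (h : Shuffle Γ u v) (h' : Shuffle Γ v w) :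
    Shuffle Γ u w :=
  Relation.ReflTransGen.trans h h'

lemma symm {w w' : List (Letter ι)} (h : Shuffle Γ w w') : Shuffle Γ w' w := by
  induction h with
  | refl => exact refl _
  | tail _ hs ih => exact (Relation.ReflTransGen.single hs.symm).trans ih

lemma swap {p s : List (Letter ι)} {x y : Letter ι} (hxy : Γ.Adj x.1 y.1) :
    Shuffle Γ (p ++ x :: y :: s) (p ++ y :: x :: s) :=
  Relation.ReflTransGen.single ⟨p, x, y, s, hxy, rfl, rfl⟩

lemma cons (c : Letter ι) {w w' : List (Letter ι)} (h : Shuffle Γ w w') :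
    Shuffle Γ (c :: w) (c :: w') := by
  refine Relation.ReflTransGen.lift (c :: ·) ?_ _ _ h
  rintro _ _ ⟨p, x, y, s, hxy, rfl, rfl⟩
  exact ⟨c :: p, x, y, s, hxy, rfl, rfl⟩

lemma length_eq {w w' : List (Letter ι)} (h : Shuffle Γ w w') : w.length = w'.length := by
  induction h with
  | refl => rfl
  | tail _ hs ih =>
      obtain ⟨p, x, y, s, _, rfl, rfl⟩ := hs
      simpa using ih

lemma ofWord_eq {w w' : List (Letter ι)} (h : Shuffle Γ w w') : ofWord Γ w = ofWord Γ w' := by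
  induction h with
  | refl => rfl
  | tail _ hs ih =>
      obtain ⟨p, x, y, s, hxy, rfl, rfl⟩ := hs
      have hc : Commute (ofLetter Γ x) (ofLetter Γ y) := (rgen_commute hxy).zpow_zpow _ _
      simp only [ih, ofWord_append, ofWord_cons, ← mul_assoc, hc.eq]

lemma move {q : List (Letter ι)} {a : Letter ι} (r : List (Letter ι))
    (h : ∀ y ∈ q, Γ.Adj a.1 y.1) : Shuffle Γ (q ++ a :: r) (a :: (q ++ r)) := by
  induction q with
  | nil => exact refl _
  | cons b q ih =>
      refine (cons b (ih fun y hy => h y (List.mem_cons_of_mem _ hy))).trans ?_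
      simpa using swap (p := []) (s := q ++ r) (h b List.mem_cons_self).symm

lemma extract_swap {q r u : List (Letter ι)} {x : Letter ι} (hq : ∀ y ∈ q, Γ.Adj x.1 y.1)
    (hs : Swap Γ (q ++ x :: r) u) :
    ∃ q' r', u = q' ++ x :: r' ∧ (∀ y ∈ q', Γ.Adj x.1 y.1) ∧
      Shuffle Γ (q ++ r) (q' ++ r') := by
  obtain ⟨p, c, d, s, hcd, he, rfl⟩ := hs
  rcases List.append_cons_eq_append_cons_iff.1 he with
    ⟨rfl, rfl, rfl⟩ | ⟨m, rfl, rfl⟩ | ⟨m, rfl, hm⟩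
  · refine ⟨q ++ [d], s, by simp, fun y hy => ?_, by simpa using refl (q ++ d :: s)⟩
    rcases List.mem_append.1 hy with hy | hy
    exacts [hq y hy, List.mem_singleton.1 hy ▸ hcd]
  · exact ⟨q, m ++ d :: c :: s, by simp, hq, by simpa using swap (p := q ++ m) (s := s) hcd⟩
  · rcases m with _ | ⟨e, m⟩
    · obtain ⟨rfl, rfl⟩ : d = x ∧ s = r := by simpa using hm
      exact ⟨p, c :: s, by simp, fun y hy => hq y (by simp [hy]), by simpa using refl _⟩
    · obtain ⟨rfl, rfl⟩ : d = e ∧ s = m ++ x :: r := by simpa using hm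
      refine ⟨p ++ d :: c :: m, r, by simp, fun y hy => hq y ?_, ?_⟩
      · simp only [List.mem_append, List.mem_cons] at hy ⊢; tauto
      · simpa using swap (p := p) (s := m ++ r) hcd

lemma extract {x : Letter ι} {w u : List (Letter ι)} (h : Shuffle Γ (x :: w) u) :
    ∃ q r, u = q ++ x :: r ∧ (∀ y ∈ q, Γ.Adj x.1 y.1) ∧ Shuffle Γ w (q ++ r) := by
  induction h with
  | refl => exact ⟨[], w, rfl, by simp, refl w⟩
  | tail _ hs ih =>
      obtain ⟨q, r, rfl, hq, hw⟩ := ih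
      obtain ⟨q', r', rfl, hq', hw'⟩ := extract_swap hq hs
      exact ⟨q', r', rfl, hq', hw.trans hw'⟩

lemma of_cons_cons {x : Letter ι} {v v' : List (Letter ι)} (h : Shuffle Γ (x :: v) (x :: v')) :
    Shuffle Γ v v' := by
  obtain ⟨_ | ⟨e, q⟩, r, he, hq, hw⟩ := extract h
  · obtain rfl : v' = r := by simpa using he
    simpa using hw
  · obtain rfl : e = x := by simpa using (List.cons.inj he).1.symm
    exact absurd (hq e (by simp)) (Γ.loopless.irrefl _)

lemma diamond {a b : Letter ι} {w u v : List (Letter ι)} (hu : Shuffle Γ w (a :: u))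
    (hv : Shuffle Γ w (b :: v)) (hab : a ≠ b) :
    Γ.Adj a.1 b.1 ∧ ∃ t, Shuffle Γ u (b :: t) ∧ Shuffle Γ v (a :: t) := by
  obtain ⟨_ | ⟨e, q⟩, r, he, hq, hw⟩ := extract (hu.symm.trans hv)
  · exact absurd (List.cons.inj he).1.symm hab
  · obtain ⟨rfl, rfl⟩ := List.cons.inj he
    exact ⟨hq b (by simp), q ++ r, hw,
      move r fun y hy => hq y (List.mem_cons_of_mem _ hy)⟩

end Shuffle

variable (Γ) in
def Reduced (w : List (Letter ι)) : Prop :=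
  ∀ p x s, ¬ Shuffle Γ w (p ++ x :: x.inv :: s)

variable (Γ) in
def StartsWith (w : List (Letter ι)) (a : Letter ι) : Prop :=
  ∃ v, Shuffle Γ w (a :: v)

section Reduced

variable {w w' : List (Letter ι)} {x : Letter ι}

lemma reduced_nil : Reduced Γ ([] : List (Letter ι)) :=
  fun p x s h => by simpa using h.length_eq

lemma Reduced.of_shuffle (hw : Reduced Γ w) (h : Shuffle Γ w w') : Reduced Γ w' :=
  fun p y s h' => hw p y s (h.trans h')

lemma Reduced.of_cons (h : Reduced Γ (x :: w)) : Reduced Γ w :=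
  fun p y s h' => h (x :: p) y s (by simpa using h'.cons x)

lemma Reduced.not_startsWith_of_cons (h : Reduced Γ (x :: w)) : ¬ StartsWith Γ w x.inv :=
  fun ⟨v, hv⟩ => h [] x v (hv.cons x)

lemma Reduced.cons (hw : Reduced Γ w) (hx : ¬ StartsWith Γ w x.inv) : Reduced Γ (x :: w) := by
  intro p z s h
  obtain ⟨q, r, he, hq, hqr⟩ := h.extract
  rcases List.append_cons_eq_append_cons_iff.1 he with
    ⟨rfl, rfl, rfl⟩ | ⟨m, rfl, hm⟩ | ⟨m, rfl, rfl⟩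
  · exact hx ⟨_, hqr.trans (Shuffle.move s hq)⟩
  · rcases m with _ | ⟨e, m⟩
    · obtain ⟨rfl, rfl⟩ := List.cons.inj hm
      exact Γ.loopless.irrefl _ (hq z (by simp))
    · obtain ⟨rfl, rfl⟩ := List.cons.inj hm
      exact hw p z (m ++ r) (by simpa using hqr)
  · exact hw (q ++ m) z s (by simpa using hqr)

lemma Reduced.startsWith_or_cons (hw : Reduced Γ w) (x : Letter ι) :
    StartsWith Γ w x.inv ∨ Reduced Γ (x :: w) :=
  or_iff_not_imp_left.2 hw.cons

lemma StartsWith.of_cons {a y : Letter ι} (h : StartsWith Γ (y :: w) a) (hne : a ≠ y) :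
    StartsWith Γ w a := by
  obtain ⟨v, hv⟩ := h
  obtain ⟨-, t, ht, -⟩ := Shuffle.diamond (Shuffle.refl (y :: w)) hv hne.symm
  exact ⟨t, ht⟩

end Reduced

instance reducedSetoid : Setoid {w : List (Letter ι) // Reduced Γ w} where
  r w w' := Shuffle Γ w.1 w'.1
  iseqv := ⟨fun _ => Shuffle.refl _, Shuffle.symm, Shuffle.trans⟩

variable (Γ) in
/-- Reduced words up to shuffling; `nf` below identifies them with the elements of `Raag Γ`. -/
def NormalForm : Type := Quotient (reducedSetoid (Γ := Γ))

namespace NormalForm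

def mk (w : List (Letter ι)) (hw : Reduced Γ w) : NormalForm Γ := Quotient.mk _ ⟨w, hw⟩

lemma mk_eq_mk {w w' : List (Letter ι)} {hw : Reduced Γ w} {hw' : Reduced Γ w'} :
    mk w hw = mk w' hw' ↔ Shuffle Γ w w' :=
  Quotient.eq

lemma exists_eq_mk (q : NormalForm Γ) : ∃ w hw, q = mk (Γ := Γ) w hw :=
  Quotient.inductionOn q fun w => ⟨w.1, w.2, rfl⟩

def length : NormalForm Γ → ℕ :=
  Quotient.lift (fun w => w.1.length) fun _ _ h => Shuffle.length_eq h

def eval : NormalForm Γ → Raag Γ :=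
  Quotient.lift (fun w => ofWord Γ w.1) fun _ _ h => Shuffle.ofWord_eq h

@[simp] lemma length_mk (w : List (Letter ι)) (hw : Reduced Γ w) :
    (mk w hw).length = w.length := rfl

@[simp] lemma eval_mk (w : List (Letter ι)) (hw : Reduced Γ w) :
    (mk w hw).eval = ofWord Γ w := rfl

open Classical in
/-- Left multiplication by `x` on reduced words. -/
noncomputable def actWord (x : Letter ι) (w : {w // Reduced Γ w}) : {w // Reduced Γ w} :=
  if h : StartsWith Γ w.1 x.inv then ⟨h.choose, (w.2.of_shuffle h.choose_spec).of_cons⟩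
  else ⟨x :: w.1, w.2.cons h⟩

lemma shuffle_actWord {x : Letter ι} {w : {w // Reduced Γ w}} {v : List (Letter ι)}
    (h : Shuffle Γ w.1 (x.inv :: v)) : Shuffle Γ (actWord x w).1 v := by
  have hs : StartsWith Γ w.1 x.inv := ⟨v, h⟩
  rw [actWord, dif_pos hs]
  exact Shuffle.of_cons_cons (hs.choose_spec.symm.trans h)

lemma actWord_of_not_startsWith {x : Letter ι} {w : {w // Reduced Γ w}}
    (h : ¬ StartsWith Γ w.1 x.inv) : (actWord x w).1 = x :: w.1 := by
  rw [actWord, dif_neg h]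

noncomputable def act (x : Letter ι) : NormalForm Γ → NormalForm Γ :=
  Quotient.map (actWord x) fun w w' (h : Shuffle Γ w.1 w'.1) => by
    by_cases hs : StartsWith Γ w.1 x.inv
    · obtain ⟨v, hv⟩ := hs
      exact (shuffle_actWord hv).trans (shuffle_actWord (h.symm.trans hv)).symm
    · have hs' : ¬ StartsWith Γ w'.1 x.inv := fun ⟨v, hv⟩ => hs ⟨v, h.trans hv⟩
      change Shuffle Γ _ _
      rw [actWord_of_not_startsWith hs, actWord_of_not_startsWith hs']
      exact h.cons x

section act

variable {w v : List (Letter ι)} {x y : Letter ι}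

lemma act_mk_of_shuffle (hw : Reduced Γ w) (hv : Reduced Γ v) (h : Shuffle Γ w (x.inv :: v)) :
    (mk w hw).act x = mk v hv :=
  Quotient.sound (shuffle_actWord (w := ⟨w, hw⟩) h)

lemma act_mk_of_reduced (hw : Reduced Γ w) (h : Reduced Γ (x :: w)) :
    (mk w hw).act x = mk (x :: w) h :=
  congrArg (Quotient.mk _) (Subtype.ext (actWord_of_not_startsWith h.not_startsWith_of_cons))

lemma act_act_inv (x : Letter ι) (q : NormalForm Γ) : (q.act x.inv).act x = q := by
  obtain ⟨w, hw, rfl⟩ := q.exists_eq_mk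
  rcases hw.startsWith_or_cons x.inv with ⟨v, hv⟩ | hx
  · have hv' : Reduced Γ v := (hw.of_shuffle hv).of_cons
    rw [act_mk_of_shuffle hw hv' hv, act_mk_of_reduced hv' (by simpa using hw.of_shuffle hv),
      mk_eq_mk]
    simpa using hv.symm
  · rw [act_mk_of_reduced hw hx, act_mk_of_shuffle hx hw (Shuffle.refl _)]

lemma act_comm_of_startsWith (hxy : Γ.Adj x.1 y.1) (hw : Reduced Γ w)
    (hy : Shuffle Γ w (y.inv :: v)) (hx : Reduced Γ (x :: w)) :
    ((mk w hw).act y).act x = ((mk w hw).act x).act y := by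
  have hv : Reduced Γ v := (hw.of_shuffle hy).of_cons
  have hxv : Reduced Γ (x :: v) := hv.cons fun ⟨t, ht⟩ => hx.not_startsWith_of_cons
    ⟨y.inv :: t, (hy.trans (ht.cons _)).trans
      (Shuffle.swap (p := []) (x := y.inv) (y := x.inv) hxy.symm)⟩
  rw [act_mk_of_shuffle hw hv hy, act_mk_of_reduced hv hxv, act_mk_of_reduced hw hx,
    act_mk_of_shuffle hx hxv ((hy.cons x).trans (Shuffle.swap (p := []) (y := y.inv) hxy))]

lemma act_comm (hxy : Γ.Adj x.1 y.1) (q : NormalForm Γ) :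
    (q.act y).act x = (q.act x).act y := by
  obtain ⟨w, hw, rfl⟩ := q.exists_eq_mk
  have hne : x.inv ≠ y.inv := fun h => Γ.ne_of_adj hxy (by simpa using congrArg Prod.fst h)
  rcases hw.startsWith_or_cons x with ⟨u, hu⟩ | hx <;>
    rcases hw.startsWith_or_cons y with ⟨v, hv⟩ | hy
  · obtain ⟨-, t, hut, hvt⟩ := Shuffle.diamond hu hv hne
    have hu' : Reduced Γ u := (hw.of_shuffle hu).of_cons
    have hv' : Reduced Γ v := (hw.of_shuffle hv).of_cons
    have ht : Reduced Γ t := (hu'.of_shuffle hut).of_cons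
    rw [act_mk_of_shuffle hw hv' hv, act_mk_of_shuffle hv' ht hvt, act_mk_of_shuffle hw hu' hu,
      act_mk_of_shuffle hu' ht hut]
  · exact (act_comm_of_startsWith hxy.symm hw hu hy).symm
  · exact act_comm_of_startsWith hxy hw hv hx
  · have hxy' : Reduced Γ (x :: y :: w) := hy.cons fun h =>
      hx.not_startsWith_of_cons (h.of_cons fun h' => by subst h'; exact Γ.loopless.irrefl _ hxy)
    have hyx' : Reduced Γ (y :: x :: w) :=
      hxy'.of_shuffle (by simpa using Shuffle.swap (p := []) hxy)
    rw [act_mk_of_reduced hw hy, act_mk_of_reduced hy hxy', act_mk_of_reduced hw hx,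
      act_mk_of_reduced hx hyx', mk_eq_mk]
    simpa using Shuffle.swap (p := []) hxy

lemma eval_act (x : Letter ι) (q : NormalForm Γ) :
    (q.act x).eval = ofLetter Γ x * q.eval := by
  obtain ⟨w, hw, rfl⟩ := q.exists_eq_mk
  rcases hw.startsWith_or_cons x with ⟨v, hv⟩ | hx
  · rw [act_mk_of_shuffle hw (hw.of_shuffle hv).of_cons hv]
    simp [hv.ofWord_eq]
  · rw [act_mk_of_reduced hw hx]
    simp

end act

noncomputable def actPerm (x : Letter ι) : Equiv.Perm (NormalForm Γ) where
  toFun := act x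
  invFun := act x.inv
  left_inv q := by simpa using act_act_inv x.inv q
  right_inv := act_act_inv x

lemma actPerm_inv (x : Letter ι) : actPerm (Γ := Γ) x.inv = (actPerm x)⁻¹ :=
  Equiv.ext fun _ => rfl

end NormalForm

open NormalForm SimpleGraph

variable (Γ) in
noncomputable def actHom : Raag Γ →* Equiv.Perm (NormalForm Γ) :=
  PresentedGroup.toGroup (f := fun i => actPerm (i, 1)) <| by
    rintro _ ⟨i, j, hij, rfl⟩
    simp only [map_mul, map_inv, FreeGroup.lift_apply_of]
    rw [← commutatorElement_def, commutatorElement_eq_one_iff_commute]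
    exact Equiv.ext fun q => act_comm hij q

lemma actHom_ofLetter (x : Letter ι) : actHom Γ (ofLetter Γ x) = actPerm x := by
  obtain ⟨i, u⟩ := x
  have hi : actHom Γ (rgen Γ i) = actPerm (i, 1) := PresentedGroup.toGroup.of _
  rcases Int.units_eq_one_or u with rfl | rfl
  · simpa [ofLetter] using hi
  · rw [show ((i, -1) : Letter ι) = Letter.inv (i, 1) from rfl, ofLetter_inv, map_inv,
      actPerm_inv, ← hi]
    simp [ofLetter]

lemma eval_actHom (g : Raag Γ) (q : NormalForm Γ) : (actHom Γ g q).eval = g * q.eval := by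
  have hg : g ∈ Subgroup.closure (Set.range (PresentedGroup.of (rels := raagRels Γ))) := by simp
  induction hg using Subgroup.closure_induction generalizing q with
  | mem _ hx =>
      obtain ⟨i, rfl⟩ := hx
      have hi : PresentedGroup.of i = ofLetter Γ (i, 1) := by simp [ofLetter, rgen]
      rw [hi, actHom_ofLetter]
      exact eval_act _ q
  | one => simp
  | mul a b _ _ ha hb => simp [ha, hb, mul_assoc]
  | inv a _ ha =>
      have h := ha ((actHom Γ a)⁻¹ q)
      rw [Equiv.Perm.inv_def, Equiv.apply_symm_apply] at h
      rw [map_inv, h, inv_mul_cancel_left, Equiv.Perm.inv_def]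

variable (Γ) in
noncomputable def nf (g : Raag Γ) : NormalForm Γ := actHom Γ g (mk [] reduced_nil)

/-- The word length of `g` with respect to the standard generators. -/
noncomputable def len (g : Raag Γ) : ℕ := (nf Γ g).length

section len

variable {w : List (Letter ι)}

lemma nf_ofLetter_mul (x : Letter ι) (g : Raag Γ) :
    nf Γ (ofLetter Γ x * g) = (nf Γ g).act x := by
  rw [nf, map_mul, Equiv.Perm.mul_apply, actHom_ofLetter]
  rfl

lemma nf_ofWord (hw : Reduced Γ w) : nf Γ (ofWord Γ w) = mk w hw := by
  induction w with
  | nil => simp [nf]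
  | cons x w ih => rw [ofWord_cons, nf_ofLetter_mul, ih hw.of_cons, act_mk_of_reduced _ hw]

lemma len_ofWord (hw : Reduced Γ w) : len (ofWord Γ w) = w.length := by
  rw [len, nf_ofWord hw, length_mk]

lemma len_one : len (1 : Raag Γ) = 0 := by
  simpa using len_ofWord (Γ := Γ) reduced_nil

lemma exists_reduced_word (g : Raag Γ) :
    ∃ w, Reduced Γ w ∧ ofWord Γ w = g ∧ w.length = len g := by
  obtain ⟨w, hw, hg⟩ := (nf Γ g).exists_eq_mk
  refine ⟨w, hw, ?_, by rw [len, hg, length_mk]⟩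
  simpa [nf, eval_actHom, hg] using congrArg NormalForm.eval hg.symm

lemma len_ofLetter_mul (x : Letter ι) (g : Raag Γ) :
    len (ofLetter Γ x * g) + 1 = len g ∨ len (ofLetter Γ x * g) = len g + 1 := by
  obtain ⟨w, hw, rfl, -⟩ := exists_reduced_word g
  rcases hw.startsWith_or_cons x with ⟨v, hv⟩ | hx
  · have hv' : Reduced Γ v := (hw.of_shuffle hv).of_cons
    have hxw : ofLetter Γ x * ofWord Γ w = ofWord Γ v := by simp [hv.ofWord_eq]
    left
    rw [hxw, len_ofWord hv', len_ofWord hw, hv.length_eq, List.length_cons]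
  · right
    rw [← ofWord_cons, len_ofWord hx, len_ofWord hw, List.length_cons]

lemma len_ofWord_le (w : List (Letter ι)) : len (ofWord Γ w) ≤ w.length := by
  induction w with
  | nil => simp [len_one]
  | cons x w ih =>
      rw [ofWord_cons, List.length_cons]
      have := len_ofLetter_mul x (ofWord Γ w)
      omega

lemma reduced_of_length_le (h : w.length ≤ len (ofWord Γ w)) : Reduced Γ w := by
  intro p x s hs
  have hle := len_ofWord_le (Γ := Γ) (p ++ s)
  have hlen := hs.length_eq
  rw [hs.ofWord_eq, show ofWord Γ (p ++ x :: x.inv :: s) = ofWord Γ (p ++ s) by simp] at h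
  simp only [List.length_append, List.length_cons] at hle hlen
  omega

lemma shuffle_of_ofWord_eq {w' : List (Letter ι)} (hw : Reduced Γ w) (hw' : Reduced Γ w')
    (h : ofWord Γ w = ofWord Γ w') : Shuffle Γ w w' :=
  mk_eq_mk.1 (by rw [← nf_ofWord hw, ← nf_ofWord hw', h])

lemma startsWith_of_len_lt {x : Letter ι} (hw : Reduced Γ w)
    (h : len (ofLetter Γ x * ofWord Γ w) < len (ofWord Γ w)) : StartsWith Γ w x.inv := by
  obtain ⟨u, -, hu, hlen⟩ := exists_reduced_word (ofLetter Γ x * ofWord Γ w)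
  have he : ofWord Γ (x.inv :: u) = ofWord Γ w := by simp [hu]
  have hr : Reduced Γ (x.inv :: u) := reduced_of_length_le (by rw [he, List.length_cons]; omega)
  exact ⟨u, shuffle_of_ofWord_eq hw hr he.symm⟩

lemma not_len_ofLetter_mul_lt_and (x : Letter ι) (g : Raag Γ) :
    ¬ (len (ofLetter Γ x * g) < len g ∧ len (ofLetter Γ x.inv * g) < len g) := by
  rintro ⟨h₁, h₂⟩
  obtain ⟨w, hw, rfl, -⟩ := exists_reduced_word g
  obtain ⟨u, hu⟩ := startsWith_of_len_lt hw h₁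
  obtain ⟨v, hv⟩ := startsWith_of_len_lt hw h₂
  rw [Letter.inv_inv] at hv
  obtain ⟨-, t, hut, -⟩ := Shuffle.diamond hu hv x.inv_ne
  exact hw [] x.inv t (by simpa using hu.trans (hut.cons _))

/-- `s⁻¹ u` and `u' t⁻¹` below are both geodesic words for `r`, hence shuffles of each other;
tracking the letter `s⁻¹` either matches it with `t⁻¹` or yields a word for `s r t` shorter
than `r`. -/
lemma ofLetter_mul_eq_mul_ofLetter {s t : Letter ι} {r : Raag Γ}
    (hs : len (ofLetter Γ s * r) < len r) (ht : len (r * ofLetter Γ t) < len r)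
    (hst : len r ≤ len (ofLetter Γ s * r * ofLetter Γ t)) :
    ofLetter Γ s * r = r * ofLetter Γ t := by
  obtain ⟨u, -, hu, hulen⟩ := exists_reduced_word (ofLetter Γ s * r)
  obtain ⟨u', -, hu', hu'len⟩ := exists_reduced_word (r * ofLetter Γ t)
  have h₁ : ofWord Γ (s.inv :: u) = r := by simp [hu]
  have h₂ : ofWord Γ (u' ++ [t.inv]) = r := by simp [hu']
  have hr₁ : Reduced Γ (s.inv :: u) :=
    reduced_of_length_le (by rw [h₁, List.length_cons]; omega)
  have hr₂ : Reduced Γ (u' ++ [t.inv]) := reduced_of_length_le (by simp [h₂]; omega)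
  obtain ⟨q, m, he, -, hum⟩ := (shuffle_of_ofWord_eq hr₁ hr₂ (h₁.trans h₂.symm)).extract
  rcases List.append_cons_eq_append_cons_iff.1 he with
    ⟨rfl, -, rfl⟩ | ⟨m', -, hm'⟩ | ⟨m', rfl, rfl⟩
  · rw [← hu, ← hu', hum.ofWord_eq, List.append_nil]
  · simp at hm'
  · have hsrt : ofLetter Γ s * r * ofLetter Γ t = ofWord Γ (q ++ m') := by
      rw [← hu, hum.ofWord_eq]
      simp [mul_assoc]
    have hle := len_ofWord_le (Γ := Γ) (q ++ m')
    have hlen := hum.length_eq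
    rw [← hsrt] at hle
    simp only [List.length_append, List.length_cons, List.length_nil] at hle hlen
    omega

end len

lemma ofLetter_ne_one (x : Letter ι) : ofLetter Γ x ≠ 1 := by
  have h : Reduced Γ [x] := reduced_nil.cons fun ⟨v, hv⟩ => by simpa using hv.length_eq
  intro hx
  simpa [hx, len_one] using len_ofWord h

lemma cayley_adj_iff {g h : Raag Γ} :
    (cayley Γ).Adj g h ↔ ∃ x : Letter ι, h = g * ofLetter Γ x := by
  constructor
  · rintro ⟨-, i, rfl | rfl⟩
    · exact ⟨(i, 1), by simp [ofLetter]⟩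
    · exact ⟨(i, -1), by simp [ofLetter]⟩
  · rintro ⟨⟨i, u⟩, rfl⟩
    refine ⟨fun h => ofLetter_ne_one (i, u) (by simpa using h.symm), i, ?_⟩
    rcases Int.units_eq_one_or u with rfl | rfl
    · simp [ofLetter]
    · simp [ofLetter]

lemma exists_walk_ofWord (g : Raag Γ) (w : List (Letter ι)) :
    ∃ p : (cayley Γ).Walk g (g * ofWord Γ w), p.length = w.length := by
  induction w generalizing g with
  | nil => exact ⟨Walk.nil.copy rfl (by simp), by rw [Walk.length_copy]; rfl⟩
  | cons x w ih =>
      obtain ⟨p, hp⟩ := ih (g * ofLetter Γ x)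
      exact ⟨(Walk.cons (cayley_adj_iff.2 ⟨x, rfl⟩) p).copy rfl (by simp [mul_assoc]),
        by simp [hp]⟩

lemma len_le_length_of_walk {g h : Raag Γ} (p : (cayley Γ).Walk g h) :
    len (g⁻¹ * h) ≤ p.length := by
  induction p with
  | nil => simp [len_one]
  | @cons u v w huv p ih =>
      obtain ⟨x, rfl⟩ := cayley_adj_iff.1 huv
      have := len_ofLetter_mul x ((u * ofLetter Γ x)⁻¹ * w)
      rw [show ofLetter Γ x * ((u * ofLetter Γ x)⁻¹ * w) = u⁻¹ * w by group] at this
      rw [Walk.length_cons]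
      omega

lemma cayley_dist (g h : Raag Γ) : (cayley Γ).dist g h = len (g⁻¹ * h) := by
  obtain ⟨w, -, hw, hlen⟩ := exists_reduced_word (g⁻¹ * h)
  obtain ⟨p, hp⟩ := exists_walk_ofWord g w
  have hgw : g * ofWord Γ w = h := by rw [hw, mul_inv_cancel_left]
  obtain ⟨q, hq⟩ := (p.copy rfl hgw).reachable.exists_walk_length_eq_dist
  refine le_antisymm ?_ (hq ▸ len_le_length_of_walk q)
  simpa [hp, hlen] using dist_le (p.copy rfl hgw)

lemma cayley_dist_mul_left (k g h : Raag Γ) :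
    (cayley Γ).dist (k * g) (k * h) = (cayley Γ).dist g h := by
  simp only [cayley_dist, mul_inv_rev, mul_assoc, inv_mul_cancel_left]

lemma cayley_dist_mul_ofLetter (g z : Raag Γ) (x : Letter ι) :
    (cayley Γ).dist (g * ofLetter Γ x) z + 1 = (cayley Γ).dist g z ∨
      (cayley Γ).dist (g * ofLetter Γ x) z = (cayley Γ).dist g z + 1 := by
  simpa only [cayley_dist, mul_inv_rev, ← ofLetter_inv, mul_assoc] using
    len_ofLetter_mul x.inv (g⁻¹ * z)

lemma not_cayley_dist_mul_ofLetter_lt_and (g z : Raag Γ) (x : Letter ι) :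
    ¬ ((cayley Γ).dist (g * ofLetter Γ x) z < (cayley Γ).dist g z ∧
      (cayley Γ).dist (g * ofLetter Γ x.inv) z < (cayley Γ).dist g z) := by
  simpa only [cayley_dist, mul_inv_rev, ← ofLetter_inv, mul_assoc, Letter.inv_inv, and_comm] using
    not_len_ofLetter_mul_lt_and x.inv (g⁻¹ * z)

lemma rgen_eq_ofLetter (i : ι) : rgen Γ i = ofLetter Γ (i, 1) := by
  simp [ofLetter]

lemma stdGeod_eq_range (g : Raag Γ) (i : ι) :
    stdGeod Γ g i = Set.range fun n : ℤ => g * rgen Γ i ^ n :=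
  Set.ext fun _ => exists_congr fun _ => eq_comm

lemma stdGeod_eq_range_ofLetter (g : Raag Γ) (y : Letter ι) :
    stdGeod Γ g y.1 = Set.range fun k : ℤ => g * ofLetter Γ y ^ k := by
  rw [stdGeod_eq_range]
  ext z
  constructor
  · rintro ⟨n, rfl⟩
    refine ⟨y.2 * n, ?_⟩
    simp only [ofLetter, ← zpow_mul, ← mul_assoc, Int.units_coe_mul_self, one_mul]
  · rintro ⟨k, rfl⟩
    exact ⟨y.2 * k, by simp only [ofLetter, ← zpow_mul]⟩

variable (Γ) in
lemma exists_cayley_dist_stdGeod_eq (h : Raag Γ) (i : ι) (z : Raag Γ) :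
    ∃ p : ℤ, ∀ n : ℤ, (cayley Γ).dist z (h * rgen Γ i ^ n) =
      (cayley Γ).dist z (h * rgen Γ i ^ p) + (n - p).natAbs := by
  simp only [dist_comm (u := z)]
  apply exists_forall_eq_add_natAbs_sub
  · intro n
    simpa only [zpow_add_one, ← mul_assoc, rgen_eq_ofLetter] using
      cayley_dist_mul_ofLetter (h * rgen Γ i ^ n) z (i, 1)
  · intro n
    simpa only [zpow_add_one, zpow_sub_one, ← mul_assoc, ofLetter_inv, rgen_eq_ofLetter] using
      not_cayley_dist_mul_ofLetter_lt_and (h * rgen Γ i ^ n) z (i, 1)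

variable (Γ) in
/-- The height on the standard geodesic `stdGeod Γ h i` of the nearest point to `z`. -/
noncomputable def proj (h : Raag Γ) (i : ι) (z : Raag Γ) : ℤ :=
  (exists_cayley_dist_stdGeod_eq Γ h i z).choose

lemma cayley_dist_eq_proj (h : Raag Γ) (i : ι) (z : Raag Γ) (n : ℤ) :
    (cayley Γ).dist z (h * rgen Γ i ^ n) =
      (cayley Γ).dist z (h * rgen Γ i ^ proj Γ h i z) + (n - proj Γ h i z).natAbs :=
  (exists_cayley_dist_stdGeod_eq Γ h i z).choose_spec n

lemma nearestPt_proj (h : Raag Γ) (i : ι) (z : Raag Γ) :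
    NearestPt (cayley Γ) (stdGeod Γ h i) z (h * rgen Γ i ^ proj Γ h i z) := by
  refine ⟨⟨_, rfl⟩, ?_⟩
  rintro _ ⟨n, rfl⟩ hne
  rw [cayley_dist_eq_proj h i z n]
  have : n ≠ proj Γ h i z := fun hn => hne (by rw [hn])
  omega

/-- The projections `x₀` of `z` and `x` of `z * y` to `l = stdGeod Γ h i` are adjacent, and
the four distances around the square `z, z * y, x, x₀` are those of the strip lemma, which
closes the square: `(z * y)⁻¹ * x = z⁻¹ * x₀`. -/
lemma exists_mul_ofLetter_eq_of_proj_ne {h z : Raag Γ} {i : ι} {y : Letter ι}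
    (hne : proj Γ h i (z * ofLetter Γ y) ≠ proj Γ h i z) :
    ∃ d : ℤˣ, z * ofLetter Γ y = h * rgen Γ i ^ (d : ℤ) * h⁻¹ * z := by
  set z' := z * ofLetter Γ y
  set p := proj Γ h i z
  set p' := proj Γ h i z'
  set x := h * rgen Γ i ^ p'
  set x₀ := h * rgen Γ i ^ p
  have hx : (cayley Γ).dist z x = (cayley Γ).dist z x₀ + (p' - p).natAbs :=
    cayley_dist_eq_proj h i z p'
  have hx₀' : (cayley Γ).dist z' x₀ = (cayley Γ).dist z' x + (p - p').natAbs :=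
    cayley_dist_eq_proj h i z' p
  have hx' : (cayley Γ).dist z' x + 1 = (cayley Γ).dist z x ∨
      (cayley Γ).dist z' x = (cayley Γ).dist z x + 1 := cayley_dist_mul_ofLetter z x y
  have hx₀ : (cayley Γ).dist z' x₀ + 1 = (cayley Γ).dist z x₀ ∨
      (cayley Γ).dist z' x₀ = (cayley Γ).dist z x₀ + 1 := cayley_dist_mul_ofLetter z x₀ y
  rw [hx₀'] at hx₀
  rw [hx] at hx'
  obtain ⟨d, hd⟩ : IsUnit (p' - p) := Int.isUnit_iff_natAbs_eq.2 (by omega)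
  have e₁ : ofLetter Γ y.inv * (z⁻¹ * x) = z'⁻¹ * x := by simp [z', mul_assoc]
  have e₂ : x * ofLetter Γ (i, -d) = x₀ := by
    simp only [x, x₀, ofLetter, Units.val_neg, mul_assoc, ← zpow_add]
    congr 2
    omega
  have key : ofLetter Γ y.inv * (z⁻¹ * x) = z⁻¹ * x * ofLetter Γ (i, -d) := by
    apply ofLetter_mul_eq_mul_ofLetter <;>
      simp only [e₁, mul_assoc, e₂, ← cayley_dist] <;> omega
  refine ⟨d, ?_⟩
  rw [ofLetter_inv] at key
  calc z * ofLetter Γ y = x * ((ofLetter Γ y)⁻¹ * (z⁻¹ * x))⁻¹ := by group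
    _ = x * (z⁻¹ * x * ofLetter Γ (i, -d))⁻¹ := by rw [key]
    _ = h * rgen Γ i ^ (d : ℤ) * h⁻¹ * z := by simp only [x, ofLetter, Units.val_neg]; group

lemma parSets_stdGeod_of_proj_ne {h z : Raag Γ} {i : ι} {y : Letter ι}
    (hne : proj Γ h i (z * ofLetter Γ y) ≠ proj Γ h i z) :
    ParSets (cayley Γ) (stdGeod Γ z y.1) (stdGeod Γ h i) := by
  obtain ⟨d, hd⟩ := exists_mul_ofLetter_eq_of_proj_ne hne
  rw [stdGeod_eq_range_ofLetter, stdGeod_eq_range]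
  refine parSets_range (c := (cayley Γ).dist z (h * rgen Γ i ^ proj Γ h i z)) (e := d)
    (p := proj Γ h i z)
    (Int.units_coe_mul_self d) fun k m => ?_
  have hk : z * ofLetter Γ y ^ k = h * rgen Γ i ^ (d * k) * h⁻¹ * z := by
    rw [(SemiconjBy.zpow_right hd k : z * _ = _ * z), conj_zpow, zpow_mul]
  have hm : h * rgen Γ i ^ m =
      h * rgen Γ i ^ (d * k) * h⁻¹ * (h * rgen Γ i ^ (m - d * k)) := by group
  rw [hk, hm, cayley_dist_mul_left, cayley_dist_eq_proj, sub_right_comm]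

lemma stdGeod_subset_coset {g₀ x : Raag Γ} {Λ : Set ι}
    (hx : x ∈ Subgroup.closure (rgen Γ '' Λ)) {j : ι} (hj : j ∈ Λ) :
    stdGeod Γ (g₀ * x) j ⊆ (g₀ * ·) '' ↑(Subgroup.closure (rgen Γ '' Λ)) := by
  rintro _ ⟨n, rfl⟩
  have hj' : rgen Γ j ∈ Subgroup.closure (rgen Γ '' Λ) :=
    Subgroup.subset_closure (Set.mem_image_of_mem _ hj)
  exact ⟨x * rgen Γ j ^ n, mul_mem hx (zpow_mem hj' n), (mul_assoc _ _ _).symm⟩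

end Raag

open Raag in
theorem stmt13_general {ι : Type} (Γ : SimpleGraph ι)
    (g₀ : Raag Γ) (Λ : Set ι) (h : Raag Γ) (i : ι)
    (K : Set (Raag Γ))
    (hK : K = (fun x => g₀ * x) '' (Subgroup.closure (rgen Γ '' Λ) : Set (Raag Γ)))
    (hnot : ∀ l'' : Set (Raag Γ), IsStdGeod Γ l'' → l'' ⊆ K →
      ¬ ParSets (cayley Γ) l'' (stdGeod Γ h i)) :
    ∃ x ∈ stdGeod Γ h i, ∀ z ∈ K, NearestPt (cayley Γ) (stdGeod Γ h i) z x := by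
  subst hK
  have hedge : ∀ x ∈ Subgroup.closure (rgen Γ '' Λ), ∀ y : Letter ι, y.1 ∈ Λ →
      proj Γ h i (g₀ * x * ofLetter Γ y) = proj Γ h i (g₀ * x) := fun x hx y hy => by
    by_contra hne
    exact hnot _ ⟨_, _, rfl⟩ (stdGeod_subset_coset hx hy) (parSets_stdGeod_of_proj_ne hne)
  have hconst : ∀ x ∈ Subgroup.closure (rgen Γ '' Λ),
      proj Γ h i (g₀ * x) = proj Γ h i g₀ := by
    intro x hx
    induction hx using Subgroup.closure_induction_right with
    | one => rw [mul_one]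
    | mul_right x hx _ hj ih =>
        obtain ⟨j, hj, rfl⟩ := hj
        rw [← ih, ← mul_assoc, rgen_eq_ofLetter, hedge x hx _ hj]
    | mul_inv_cancel x hx _ hj ih =>
        obtain ⟨j, hj, rfl⟩ := hj
        rw [← ih, ← mul_assoc, rgen_eq_ofLetter, ← ofLetter_inv, hedge x hx _ hj]
  refine ⟨h * rgen Γ i ^ proj Γ h i g₀, ⟨_, rfl⟩, ?_⟩
  rintro _ ⟨x, hx, rfl⟩
  rw [← hconst x hx]
  exact nearestPt_proj h i (g₀ * x)

/-- Let `K ⊂ X(Γ)` be a standard subcomplex (a coset `g₀·G(Λ)` of a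
standard subgroup, at the level of 0-skeleta) and let `v = Δ(l)` be a vertex of
the extension complex `𝒫(Γ)`, represented by the standard geodesic `l`.  If
`v ∉ Δ(K)`, i.e. no standard geodesic contained in `K` is parallel to `l`, then
the 0-skeleton of `K` is contained in a single `v`-level. -/
theorem stmt13 {ι : Type} [Finite ι] (Γ : SimpleGraph ι)
    (g₀ : Raag Γ) (Λ : Set ι) (h : Raag Γ) (i : ι)
    (K : Set (Raag Γ))
    (hK : K = (fun x => g₀ * x) '' (Subgroup.closure (rgen Γ '' Λ) : Set (Raag Γ)))
    (hnot : ∀ l'' : Set (Raag Γ), IsStdGeod Γ l'' → l'' ⊆ K →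
      ¬ ParSets (cayley Γ) l'' (stdGeod Γ h i)) :
    ∃ x ∈ stdGeod Γ h i, ∀ z ∈ K, NearestPt (cayley Γ) (stdGeod Γ h i) z x :=
  stmt13_general Γ g₀ Λ h i K hK hnot
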